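/- Let l ≥ 1 and let h₁,…,h_l be nonzero integers. Then the Shannon entropy of h₁X₁+⋯+h_lX_l satisfies H(h₁X₁+⋯+h_lX_l) > (1/2)·log₂(πl/2). -/

import Mathlib

/-!
Shannon entropy dominates min-entropy, so `H(X) ≥ -log₂ max_z p_X(z)`. Erdős' form of the
Littlewood–Offord bound gives `p_X(z) ≤ C(l, ⌊l/2⌋) / 2^l`: flipping the coordinates with
`h_i < 0` maps each fibre `{S : ∑_{i∈S} h_i = z}` injectively onto a level set of the positive
weights `|h_i|`, which is an antichain, so Sperner's theorem applies. Finally the lower bound in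
Wallis' product, `W n ≥ (2n+1)/(2n+2) · π/2`, is exactly `C(2n,n)² π (2n+1)² ≤ 4 (n+1) 16ⁿ`,
which gives `C(l, ⌊l/2⌋) / 2^l < √(2/(π l))` for both parities of `l`.
-/

open scoped BigOperators

/-- Probability mass function of `h₁X₁+⋯+h_mX_m`, where `X₁,…,X_m` are independent and
uniform on `{0,1}`: `p_X(z) = 2^{-m}·|{ε ∈ {0,1}^m : ε₁h₁+⋯+ε_mh_m = z}|`. -/
noncomputable def pX {m : ℕ} (h : Fin m → ℤ) (z : ℤ) : ℝ :=
  ((Finset.univ.filter fun ε : Fin m → Bool =>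
      (∑ i ∈ Finset.univ.filter (fun i => ε i = true), h i) = z).card : ℝ) / 2 ^ m

/-- Shannon entropy of `h₁X₁+⋯+h_mX_m` (with `0·log₂ 0` interpreted as `0`). -/
noncomputable def entX {m : ℕ} (h : Fin m → ℤ) : ℝ :=
  -∑' z : ℤ, pX h z * Real.logb 2 (pX h z)

open Real Nat Finset

theorem Finset.sum_mul_logb_le_logb {α : Type*} {s : Finset α} {p : α → ℝ} {b M : ℝ}
    (hb : 1 < b) (hp : ∀ a ∈ s, 0 ≤ p a) (hpM : ∀ a ∈ s, p a ≤ M) (hs : ∑ a ∈ s, p a = 1) :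
    ∑ a ∈ s, p a * logb b (p a) ≤ logb b M :=
  calc ∑ a ∈ s, p a * logb b (p a)
      ≤ ∑ a ∈ s, p a * logb b M := by
        refine sum_le_sum fun a ha => ?_
        obtain hpa | hpa := (hp a ha).eq_or_lt
        · simp [← hpa]
        · exact mul_le_mul_of_nonneg_left (logb_le_logb_of_le hb hpa (hpM a ha)) hpa.le
    _ = logb b M := by rw [← sum_mul, hs, one_mul]

section LittlewoodOfford

variable {ι G : Type*}

theorem isAntichain_setOf_sum_eq {M : Type*} [AddCommMonoid M] [PartialOrder M]
    [IsOrderedCancelAddMonoid M] {w : ι → M} (hw : ∀ i, 0 < w i) (c : M) :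
    IsAntichain (· ⊆ ·) {S : Finset ι | ∑ i ∈ S, w i = c} := by
  intro S hS T hT hne hST
  obtain ⟨i, hiT, hiS⟩ := exists_of_ssubset (ssubset_of_subset_of_ne hST hne)
  exact (sum_lt_sum_of_subset hST hiT hiS (hw i) fun j _ _ => (hw j).le).ne (hS.trans hT.symm)

variable [Fintype ι] [AddCommGroup G] [LinearOrder G] [IsOrderedAddMonoid G]

theorem sum_symmDiff_filter_neg_abs [DecidableEq ι] (h : ι → G) (S : Finset ι) :
    ∑ i ∈ symmDiff S ({i | h i < 0} : Finset ι), |h i| =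
      ∑ i ∈ S, h i - ∑ i ∈ {i | h i < 0}, h i := by
  rw [← Fintype.sum_ite_mem, ← Fintype.sum_ite_mem S, ← Fintype.sum_ite_mem _ h,
    ← sum_sub_distrib]
  refine sum_congr rfl fun i _ => ?_
  by_cases hS : i ∈ S <;> by_cases hi : h i < 0 <;>
    simp [Finset.mem_symmDiff, hS, hi, abs_of_neg, abs_of_nonneg, not_lt.1]

theorem card_filter_sum_eq_le_choose_half {h : ι → G} (hh : ∀ i, h i ≠ 0) (z : G) :
    #{S : Finset ι | ∑ i ∈ S, h i = z} ≤
      (Fintype.card ι).choose (Fintype.card ι / 2) := by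
  classical
  set N : Finset ι := {i | h i < 0}
  have hanti := isAntichain_setOf_sum_eq (fun i => abs_pos.2 (hh i)) (z - ∑ i ∈ N, h i)
  calc #{S : Finset ι | ∑ i ∈ S, h i = z}
      = #(image (symmDiff · N) {S : Finset ι | ∑ i ∈ S, h i = z}) :=
        (card_image_of_injective _ (symmDiff_left_injective N)).symm
    _ ≤ _ := by
      refine IsAntichain.sperner (hanti.subset ?_)
      intro T hT
      obtain ⟨S, hS, rfl⟩ := mem_image.1 hT
      simp only [mem_filter, mem_univ, true_and] at hS
      exact (sum_symmDiff_filter_neg_abs h S).trans (by rw [hS])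

theorem card_filter_bool_sum_eq_le_choose_half [DecidableEq ι] {h : ι → G} (hh : ∀ i, h i ≠ 0)
    (z : G) :
    #{ε : ι → Bool | ∑ i ∈ {i | ε i = true}, h i = z} ≤
      (Fintype.card ι).choose (Fintype.card ι / 2) :=
  calc #{ε : ι → Bool | ∑ i ∈ {i | ε i = true}, h i = z}
      ≤ #{S : Finset ι | ∑ i ∈ S, h i = z} := by
        refine card_le_card_of_injOn (fun ε => ({i | ε i = true} : Finset ι))
          (fun ε hε => by simpa using hε) fun ε _ ε' _ hεε' => ?_
        funext i
        simpa using congrArg (i ∈ ·) hεε'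
    _ ≤ _ := card_filter_sum_eq_le_choose_half hh z

end LittlewoodOfford

theorem Real.Wallis.W_eq_centralBinom (n : ℕ) :
    Wallis.W n = 16 ^ n / ((centralBinom n : ℝ) ^ 2 * (2 * n + 1)) := by
  have hfac : ((2 * n)! : ℝ) = centralBinom n * n ! * n ! := by
    have := Nat.choose_mul_factorial_mul_factorial (show n ≤ 2 * n by omega)
    rw [show 2 * n - n = n by omega] at this
    exact_mod_cast this.symm
  rw [Wallis.W_eq_factorial_ratio, hfac, pow_mul]
  field_simp
  norm_num

theorem pi_mul_sq_mul_centralBinom_sq_le (n : ℕ) :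
    π * (2 * n + 1) ^ 2 * (centralBinom n : ℝ) ^ 2 ≤ 4 * (n + 1) * 16 ^ n := by
  have hC : (0 : ℝ) < centralBinom n := mod_cast centralBinom_pos n
  have h := Wallis.le_W n
  rw [Wallis.W_eq_centralBinom, le_div_iff₀ (by positivity)] at h
  field_simp at h
  linarith

theorem pi_mul_mul_choose_half_sq_lt (l : ℕ) :
    π * l * (l.choose (l / 2) : ℝ) ^ 2 < 2 * 4 ^ l := by
  -- The slack is `4n(n+1) < (2n+1)²` for `l = 2n` and `2n+1 < 2n+2` for `l = 2n+1`.
  obtain ⟨n, rfl | rfl⟩ := Nat.even_or_odd' l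
  · have key := pi_mul_sq_mul_centralBinom_sq_le n
    rw [show 2 * n / 2 = n by omega, ← centralBinom_eq_two_mul_choose, pow_mul,
      show (4 : ℝ) ^ 2 = 16 by norm_num]
    have : π * ↑(2 * n) * (centralBinom n : ℝ) ^ 2 * (2 * n + 1) ^ 2
        < 2 * 16 ^ n * (2 * n + 1) ^ 2 := by
      push_cast
      nlinarith [mul_le_mul_of_nonneg_left key (by positivity : (0 : ℝ) ≤ 2 * n),
        pow_pos (by norm_num : (0 : ℝ) < 16) n]
    exact lt_of_mul_lt_mul_right this (by positivity)
  · have key := pi_mul_sq_mul_centralBinom_sq_le n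
    have hrel : ((n : ℝ) + 1) * (2 * n + 1).choose n = (2 * n + 1) * centralBinom n := by
      have := Nat.add_one_mul_choose_eq (2 * n) n
      rw [choose_symm_half] at this
      rw [centralBinom_eq_two_mul_choose]
      exact_mod_cast (this.trans (mul_comm _ _)).symm
    rw [show (2 * n + 1) / 2 = n by omega, pow_succ (4 : ℝ), pow_mul,
      show (4 : ℝ) ^ 2 = 16 by norm_num]
    have : π * ↑(2 * n + 1) * ((2 * n + 1).choose n : ℝ) ^ 2 * (n + 1) ^ 2
        < 2 * (16 ^ n * 4) * (n + 1) ^ 2 := by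
      rw [show π * ↑(2 * n + 1) * ((2 * n + 1).choose n : ℝ) ^ 2 * (n + 1) ^ 2
          = π * ↑(2 * n + 1) * (((n : ℝ) + 1) * (2 * n + 1).choose n) ^ 2 by ring, hrel]
      push_cast
      nlinarith [mul_le_mul_of_nonneg_left key (by positivity : (0 : ℝ) ≤ 2 * n + 1),
        pow_pos (by norm_num : (0 : ℝ) < 16) n]
    exact lt_of_mul_lt_mul_right this (by positivity)

theorem half_logb_lt_neg_logb_choose_half_div {l : ℕ} (hl : 1 ≤ l) :
    1 / 2 * logb 2 (π * l / 2) < -logb 2 (l.choose (l / 2) / 2 ^ l) := by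
  have hC : (0 : ℝ) < l.choose (l / 2) := mod_cast choose_pos (div_le_self l 2)
  have hlt : π * l / 2 < (2 ^ l / l.choose (l / 2)) ^ 2 := by
    rw [div_pow, ← pow_mul, mul_comm l, pow_mul, lt_div_iff₀ (by positivity)]
    norm_num
    linarith [pi_mul_mul_choose_half_sq_lt l]
  have := logb_lt_logb one_lt_two (by positivity) hlt
  rw [logb_pow] at this
  rw [← logb_inv, inv_div]
  push_cast at this
  linarith

section

variable {m : ℕ} (h : Fin m → ℤ)

def subsetSums : Finset ℤ :=
  univ.image fun ε : Fin m → Bool => ∑ i ∈ {i | ε i = true}, h i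

theorem pX_nonneg (z : ℤ) : 0 ≤ pX h z := by
  unfold pX; positivity

theorem pX_eq_zero_of_notMem {z : ℤ} (hz : z ∉ subsetSums h) : pX h z = 0 := by
  simp only [subsetSums, mem_image, mem_univ, true_and, not_exists] at hz
  simp [pX, filter_eq_empty_iff.2 fun ε _ => hz ε]

theorem sum_pX : ∑ z ∈ subsetSums h, pX h z = 1 := by
  simp only [pX, ← sum_div]
  rw [div_eq_one_iff_eq (by positivity)]
  exact_mod_cast (card_eq_sum_card_image _ univ).symm.trans (by simp)

theorem entX_eq_sum : entX h = -∑ z ∈ subsetSums h, pX h z * logb 2 (pX h z) := by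
  rw [entX, tsum_eq_sum fun z hz => by simp [pX_eq_zero_of_notMem h hz]]

theorem neg_logb_le_entX {M : ℝ} (hM : ∀ z, pX h z ≤ M) : -logb 2 M ≤ entX h := by
  rw [entX_eq_sum, neg_le_neg_iff]
  exact sum_mul_logb_le_logb one_lt_two (fun z _ => pX_nonneg h z) (fun z _ => hM z) (sum_pX h)

theorem pX_le_choose_half_div (hh : ∀ i, h i ≠ 0) (z : ℤ) :
    pX h z ≤ m.choose (m / 2) / 2 ^ m := by
  unfold pX
  gcongr
  exact_mod_cast Fintype.card_fin m ▸ card_filter_bool_sum_eq_le_choose_half hh z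

end

theorem cheap_entropy_littlewood_offord (l : ℕ) (hl : 1 ≤ l)
    (h : Fin l → ℤ) (hh : ∀ i, h i ≠ 0) :
    (1 / 2) * Real.logb 2 (Real.pi * (l : ℝ) / 2) < entX h :=
  (half_logb_lt_neg_logb_choose_half_div hl).trans_le
    (neg_logb_le_entX h (pX_le_choose_half_div h hh))
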